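/- Let K be a Galois number field of degree k ≥ 3 with incomplete norm form f. There is a constant C = C(K) such that for every nonzero integral ideal 𝔫 of O_K, ρ(𝔫) ≤ C · (N𝔫)^{1/k}. -/

import Mathlib

/-!
Write `N = N𝔫`. By the first isomorphism theorem, `ρ(𝔫) = N / #R`, where `R` is the image of
`(ℤ/N)^{k-1} → 𝓞 K / 𝔫`, `x ↦ ∑ xᵢ ωᵢ`. Distinct integer vectors in the box `[0, T]^{k-1}` have
distinct images as soon as `E T^k < N`: the difference `α` of two of them lies in `𝔫`, so `N`
divides `N(α)`, while bounding the coordinates of `α` gives `|N(α)| ≤ E T^k` with `E` depending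
only on `ω`, hence `α = 0`.
Choosing `T ≈ (N / (E+1))^{1/k}` gives `#R ≥ (T+1)^{k-1} ≫ N^{(k-1)/k}`.
-/

open NumberField

noncomputable section

/-- ρ(𝔫) = (N𝔫)^{-(k-2)} #{x mod N𝔫 : 𝔫 ∣ (x)}. -/
def rhoIdeal (K : Type) [Field K] [NumberField K] (k : ℕ)
    (ω : Module.Basis (Fin k) ℤ (𝓞 K)) (𝔫 : Ideal (𝓞 K)) : ℝ :=
  (Nat.card {x : Fin (k-1) → ZMod (Ideal.absNorm 𝔫) //
      (∑ i : Fin (k-1), ((x i).val : ℤ) • ω (Fin.castLE (Nat.sub_le k 1) i)) ∈ 𝔫} : ℝ)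
    / (Ideal.absNorm 𝔫 : ℝ) ^ (k - 2)

theorem exists_abs_norm_sum_smul_le {S ι κ : Type*} [CommRing S] [IsDomain S] [Fintype ι]
    [DecidableEq ι] [Fintype κ] (b : Module.Basis ι ℤ S) (v : κ → S) :
    ∃ E : ℤ, 0 ≤ E ∧ ∀ (d : κ → ℤ) (T : ℕ), (∀ i, |d i| ≤ T) →
      |Algebra.norm ℤ (∑ i, d i • v i)| ≤ E * T ^ Fintype.card ι := by
  set M : ℤ := ∑ j, ∑ i, |b.repr (v i) j|
  refine ⟨ClassGroup.normBound AbsoluteValue.abs b * M ^ Fintype.card ι,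
    by positivity [(ClassGroup.normBound_pos AbsoluteValue.abs b).le], fun d T hd => ?_⟩
  have hcoord : ∀ j, |b.repr (∑ i, d i • v i) j| ≤ M * T := fun j => calc
    |b.repr (∑ i, d i • v i) j| = |∑ i, d i * b.repr (v i) j| := by
      simp only [map_sum, map_zsmul, Finsupp.coe_finsetSum, Finset.sum_apply,
        Finsupp.smul_apply, smul_eq_mul]
    _ ≤ ∑ i, |d i| * |b.repr (v i) j| := by
      simpa only [abs_mul] using Finset.abs_sum_le_sum_abs (fun i => d i * b.repr (v i) j) _
    _ ≤ ∑ i, T * |b.repr (v i) j| := by gcongr with i; exact hd i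
    _ = T * ∑ i, |b.repr (v i) j| := by rw [Finset.mul_sum]
    _ ≤ T * M := by
      gcongr
      exact Finset.single_le_sum (f := fun j => ∑ i, |b.repr (v i) j|)
        (fun _ _ => by positivity) (Finset.mem_univ j)
    _ = M * T := mul_comm _ _
  calc |Algebra.norm ℤ (∑ i, d i • v i)|
      ≤ ClassGroup.normBound AbsoluteValue.abs b * (M * T) ^ Fintype.card ι :=
        ClassGroup.norm_le AbsoluteValue.abs b _ hcoord
    _ = _ := by rw [mul_pow, mul_assoc]

theorem AddMonoidHom.card_ker_mul_card_range {G H : Type*} [AddGroup G] [AddGroup H]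
    (f : G →+ H) : Nat.card f.ker * Nat.card f.range = Nat.card G := by
  rw [← AddSubgroup.index_ker, AddSubgroup.card_mul_index]

namespace Ideal

variable {S κ : Type*} [CommRing S] [IsDedekindDomain S] [Module.Free ℤ S]

theorem eq_zero_of_mem_of_abs_norm_lt [Module.Finite ℤ S] {I : Ideal S} {x : S} (hx : x ∈ I)
    (hlt : |Algebra.norm ℤ x| < absNorm I) : x = 0 := by
  by_contra hx0
  have hnorm : Algebra.norm ℤ x ≠ 0 := Algebra.norm_ne_zero_iff.mpr hx0
  have hdvd : (absNorm I : ℤ) ∣ |Algebra.norm ℤ x| :=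
    (dvd_abs _ _).mpr (absNorm_dvd_norm_of_mem hx)
  exact hlt.not_ge (Int.le_of_dvd (abs_pos.mpr hnorm) hdvd)

variable [Fintype κ] (I : Ideal S)

/-- `x ↦ ∑ xᵢ vᵢ mod I`, well defined on residues mod `N(I)` because `N(I) ∈ I`. -/
def linearCombinationMod (v : κ → S) : (κ → ZMod (absNorm I)) →+ S ⧸ I :=
  ∑ i, (ZMod.lift _ ⟨zmultiplesHom _ (Quotient.mk I (v i)), by
    rw [zmultiplesHom_apply, natCast_zsmul, nsmul_eq_mul, ← map_natCast (Quotient.mk I),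
      ← map_mul, Quotient.eq_zero_iff_mem]
    exact I.mul_mem_right (v i) I.absNorm_mem⟩).comp
      (Pi.evalAddMonoidHom _ i)

theorem linearCombinationMod_intCast (v : κ → S) (m : κ → ℤ) :
    linearCombinationMod I v (fun i => m i) = Quotient.mk I (∑ i, m i • v i) := by
  simp [linearCombinationMod, ZMod.lift_coe]

theorem linearCombinationMod_apply [NeZero (absNorm I)] (v : κ → S) (x : κ → ZMod (absNorm I)) :
    linearCombinationMod I v x = Quotient.mk I (∑ i, ((x i).val : ℤ) • v i) := by
  simp only [← linearCombinationMod_intCast, Int.cast_natCast, ZMod.natCast_zmod_val]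

theorem pow_card_le_card_range_linearCombinationMod [Module.Finite ℤ S] {v : κ → S}
    (hv : LinearIndependent ℤ v) {T : ℕ}
    (hT : ∀ d : κ → ℤ, (∀ i, |d i| ≤ T) → |Algebra.norm ℤ (∑ i, d i • v i)| < absNorm I) :
    (T + 1) ^ Fintype.card κ ≤ Nat.card (linearCombinationMod I v).range := by
  have : NeZero (absNorm I) := ⟨(by simpa using hT 0 (by simp) : 0 < absNorm I).ne'⟩
  have : Finite (linearCombinationMod I v).range :=
    Finite.of_surjective _ (linearCombinationMod I v).rangeRestrict_surjective
  let box : (κ → Fin (T + 1)) → (linearCombinationMod I v).range := fun m =>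
    ⟨linearCombinationMod I v (fun i => ((m i : ℕ) : ℤ)), ⟨_, rfl⟩⟩
  have hbox : Function.Injective box := by
    intro m m' hmm'
    set d : κ → ℤ := fun i => (m i : ℤ) - (m' i : ℤ)
    have hmem : ∑ i, d i • v i ∈ I := by
      have h := congrArg Subtype.val hmm'
      simp only [box, linearCombinationMod_intCast, Quotient.eq] at h
      simpa [d, sub_smul, Finset.sum_sub_distrib] using h
    have hd : ∀ i, |d i| ≤ T := fun i => by
      simp only [d, abs_sub_le_iff]; omega
    have hd0 : ∀ i, d i = 0 :=
      Fintype.linearIndependent_iff.mp hv d (eq_zero_of_mem_of_abs_norm_lt hmem (hT d hd))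
    exact funext fun i => Fin.ext (by simpa [d, sub_eq_zero] using hd0 i)
  calc (T + 1) ^ Fintype.card κ = Nat.card (κ → Fin (T + 1)) := by
        rw [Nat.card_fun, Nat.card_eq_fintype_card, Fintype.card_fin, Nat.card_eq_fintype_card]
    _ ≤ _ := Nat.card_le_card_of_injective box hbox

end Ideal

theorem rhoIdeal_eq_absNorm_div_card_range {K : Type} [Field K] [NumberField K] {k : ℕ}
    (hk : 2 ≤ k) (ω : Module.Basis (Fin k) ℤ (𝓞 K)) {𝔫 : Ideal (𝓞 K)} (h𝔫 : 𝔫 ≠ 0) :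
    rhoIdeal K k ω 𝔫 = Ideal.absNorm 𝔫 / Nat.card
      (𝔫.linearCombinationMod fun i : Fin (k - 1) => ω (Fin.castLE (Nat.sub_le k 1) i)).range := by
  have : NeZero (Ideal.absNorm 𝔫) := ⟨Ideal.absNorm_eq_zero_iff.not.mpr h𝔫⟩
  set f := 𝔫.linearCombinationMod fun i : Fin (k - 1) => ω (Fin.castLE (Nat.sub_le k 1) i)
  have hker : Nat.card {x : Fin (k - 1) → ZMod (Ideal.absNorm 𝔫) //
      (∑ i, ((x i).val : ℤ) • ω (Fin.castLE (Nat.sub_le k 1) i)) ∈ 𝔫} = Nat.card f.ker :=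
    Nat.card_congr <| Equiv.subtypeEquivRight fun x => by
      rw [AddMonoidHom.mem_ker, Ideal.linearCombinationMod_apply, Ideal.Quotient.eq_zero_iff_mem]
  have hcard :
      Nat.card f.ker * Nat.card f.range = Ideal.absNorm 𝔫 * Ideal.absNorm 𝔫 ^ (k - 2) := by
    rw [f.card_ker_mul_card_range, Nat.card_fun, Nat.card_zmod, Nat.card_eq_fintype_card,
      Fintype.card_fin, ← pow_succ', show k - 2 + 1 = k - 1 by omega]
  have : Finite f.range := Finite.of_surjective _ f.rangeRestrict_surjective
  rw [rhoIdeal, hker, div_eq_div_iff (pow_ne_zero _ (Nat.cast_ne_zero.mpr (NeZero.ne _)))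
    (by exact_mod_cast Nat.card_pos.ne')]
  exact_mod_cast hcard

theorem natFloor_div_pow_mul_lt {x c : ℝ} (hx : 0 < x) (hc : 1 ≤ c) (n : ℕ) :
    (c ^ n - 1) * (⌊x / c⌋₊ : ℝ) ^ n < x ^ n := by
  have hfloor : (⌊x / c⌋₊ : ℝ) ^ n ≤ x ^ n / c ^ n := by
    rw [← div_pow]
    exact pow_le_pow_left₀ (Nat.cast_nonneg _) (Nat.floor_le (by positivity)) n
  calc (c ^ n - 1) * (⌊x / c⌋₊ : ℝ) ^ n ≤ (c ^ n - 1) * (x ^ n / c ^ n) := by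
        gcongr
        linarith [one_le_pow₀ (n := n) hc]
    _ < x ^ n := by
        rw [mul_div_assoc', div_lt_iff₀ (by positivity)]
        nlinarith [pow_pos hx n]

theorem pow_succ_div_natFloor_div_add_one_pow_le {x c : ℝ} (hx : 0 < x) (hc : 0 < c) (n : ℕ) :
    x ^ (n + 1) / ((⌊x / c⌋₊ : ℝ) + 1) ^ n ≤ c ^ n * x := calc
  x ^ (n + 1) / ((⌊x / c⌋₊ : ℝ) + 1) ^ n ≤ x ^ (n + 1) / (x / c) ^ n := by
      gcongr; exact (Nat.lt_floor_add_one _).le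
  _ = c ^ n * x := by
      rw [div_pow, div_div_eq_mul_div, pow_succ]
      field_simp

/-- ρ(𝔫) ≤ C (N𝔫)^{1/k}. -/
theorem rhoIdeal_le
    (K : Type) [Field K] [NumberField K] (k : ℕ) (hk : 3 ≤ k)
    (ω : Module.Basis (Fin k) ℤ (𝓞 K)) :
    ∃ C : ℝ, 0 < C ∧ ∀ 𝔫 : Ideal (𝓞 K), 𝔫 ≠ 0 →
      rhoIdeal K k ω 𝔫 ≤ C * (Ideal.absNorm 𝔫 : ℝ) ^ (1 / (k : ℝ)) := by
  have hv : LinearIndependent ℤ fun i : Fin (k - 1) ↦ ω (Fin.castLE (Nat.sub_le k 1) i) :=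
    ω.linearIndependent.comp _ (Fin.castLE_injective _)
  obtain ⟨E, hE0, hE⟩ :=
    exists_abs_norm_sum_smul_le ω fun i : Fin (k - 1) ↦ ω (Fin.castLE (Nat.sub_le k 1) i)
  rw [Fintype.card_fin] at hE
  obtain ⟨c, hc, hck⟩ : ∃ c : ℝ, 1 ≤ c ∧ c ^ k = E + 1 :=
    ⟨_, Real.one_le_rpow (by simpa using hE0) (by positivity),
      Real.rpow_inv_natCast_pow (by positivity) (by omega)⟩
  refine ⟨c ^ (k - 1), by positivity, fun 𝔫 h𝔫 => ?_⟩
  have hN : 0 < (Ideal.absNorm 𝔫 : ℝ) :=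
    Nat.cast_pos.mpr (Nat.pos_of_ne_zero (Ideal.absNorm_eq_zero_iff.not.mpr h𝔫))
  set x : ℝ := (Ideal.absNorm 𝔫 : ℝ) ^ (1 / (k : ℝ)) with hx
  have hxk : x ^ k = Ideal.absNorm 𝔫 := by
    rw [hx, one_div]
    exact Real.rpow_inv_natCast_pow hN.le (by omega)
  have hbox := 𝔫.pow_card_le_card_range_linearCombinationMod hv (T := ⌊x / c⌋₊) fun d hd => by
    have hlt := natFloor_div_pow_mul_lt (x := x) (by positivity) hc k
    rw [hck, hxk, add_sub_cancel_right] at hlt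
    exact (hE d _ hd).trans_lt (by exact_mod_cast hlt)
  rw [Fintype.card_fin] at hbox
  rw [rhoIdeal_eq_absNorm_div_card_range (by omega) ω h𝔫]
  calc (Ideal.absNorm 𝔫 : ℝ) / _ ≤ Ideal.absNorm 𝔫 / ((⌊x / c⌋₊ : ℝ) + 1) ^ (k - 1) := by
        gcongr; exact_mod_cast hbox
    _ ≤ c ^ (k - 1) * x := by
        have h := pow_succ_div_natFloor_div_add_one_pow_le (x := x) (by positivity)
          (by positivity) (k - 1)
        rwa [Nat.sub_add_cancel (by omega), hxk] at h

end
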